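/- Let q ≥ 1 and, for 0 < a ≤ ρ, define λ(a, ρ) = ∫_1^{sinh(ρ)/sinh(a)} (v^{2q} − 1)^{−1/2} · sinh(a) · (1 + v² sinh(a)²)^{−1/2} dv. Fix ρ > 0. Then the function γ(a) = λ(a, ρ) on (0, ρ) is positive and continuous, satisfies γ(a) → 0 as a → 0⁺ and γ(a) → 0 as a → ρ⁻, and attains its maximum over (0, ρ) at exactly one point a* ∈ (0, ρ). -/

import Mathlib

/-!
Write `λ(a) = ∫_1^{X(a)} w(v) k(sinh a, v) dv` with `X(a) = sinh ρ / sinh a`,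
`w(v) = (v^{2q} - 1)^{-1/2}` (`catWeight`) and `k(s, v) = s (1 + v² s²)^{-1/2}` (`catKernel`).
Since `w(v) ≤ (v - 1)^{-1/2}` and `|k(s, v)| ≤ 1/v`, we have `0 < λ(a) ≤ 2 √(X(a) - 1)`, which
vanishes as `a → ρ`, and `λ(a) ≤ ∫_1^∞ w(v) k(sinh a, v) dv`, which vanishes as `a → 0` by
dominated convergence; so `λ` attains its maximum on `(0, ρ)`.

Differentiating under the integral sign and at the moving endpoint gives
`λ'(a) = cosh a · (A(a) - B(a))`, where `A(a) = ∫_1^{X(a)} w(v) (1 + v² sinh² a)^{-3/2} dv`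
(`catLamDerivInt`) and `B(a) = X(a) w(X(a)) / cosh ρ` (`catLamDerivBdry`). `A` is strictly
decreasing, and for `q ≥ 1` so is `x ↦ x w(x)`, which makes `B` strictly increasing. Hence `λ'`
has at most one zero in `(0, ρ)`, and the maximum is attained only once.
-/

/-- The height at radius `ρ` of the profile curve of the r-catenoid with neck radius `a`. -/
noncomputable def catLam (q a ρ : ℝ) : ℝ :=
  ∫ v in (1 : ℝ)..(Real.sinh ρ / Real.sinh a),
    (v ^ (2 * q) - 1) ^ (-(1 : ℝ) / 2) * Real.sinh a *
      (1 + v ^ 2 * Real.sinh a ^ 2) ^ (-(1 : ℝ) / 2)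

open MeasureTheory Real Set Filter Topology Asymptotics

lemma rpow_neg_half_sq {y : ℝ} (hy : 0 < y) : (y ^ 2) ^ (-(1 : ℝ) / 2) = y⁻¹ := by
  rw [← rpow_natCast y 2, ← rpow_mul hy.le]
  norm_num [rpow_neg_one]

theorem exists_isMaxOn_Ioo_of_tendsto {X Y : Type*}
    [ConditionallyCompleteLinearOrder X] [DenselyOrdered X] [TopologicalSpace X] [OrderTopology X]
    [LinearOrder Y] [TopologicalSpace Y] [OrderTopology Y] {f : X → Y} {a b : X} {l : Y}
    (hab : a < b) (hfc : ContinuousOn f (Ioo a b)) (ha : Tendsto f (𝓝[>] a) (𝓝 l))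
    (hb : Tendsto f (𝓝[<] b) (𝓝 l)) (hl : ∀ x ∈ Ioo a b, l < f x) :
    ∃ c ∈ Ioo a b, IsMaxOn f (Ioo a b) c := by
  obtain ⟨c, hc, hmin | hmax⟩ := exists_isExtrOn_Ioo_of_tendsto hab hfc ha hb
  · have := nhdsGT_neBot_of_exists_gt ⟨b, hab⟩
    obtain ⟨x, hxc, hx⟩ := ((ha.eventually (gt_mem_nhds (hl c hc))).and
      (Ioo_mem_nhdsGT hab)).exists
    exact absurd (isMinOn_iff.1 hmin x hx) (not_le.2 hxc)
  · exact ⟨c, hc, hmax⟩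

theorem hasDerivAt_intervalIntegral_varying_upper {F : ℝ → ℝ → ℝ} {b φ : ℝ → ℝ}
    {a₀ c D b' : ℝ}
    (hD : HasDerivAt (fun a => ∫ v in c..b a₀, F a v) D a₀) (hb : HasDerivAt b b' a₀)
    (hint : ∀ᶠ a in 𝓝 a₀, IntervalIntegrable (F a) volume c (b a₀) ∧
      IntervalIntegrable (F a) volume (b a₀) (b a) ∧ IntervalIntegrable (F a₀) volume (b a₀) (b a))
    (hmeas : StronglyMeasurableAtFilter (F a₀) (𝓝 (b a₀))) (hcont : ContinuousAt (F a₀) (b a₀))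
    (hφ : Tendsto φ (𝓝 a₀) (𝓝 0))
    (hunif : ∀ᶠ a in 𝓝 a₀, ∀ v ∈ uIoc (b a₀) (b a), |F a v - F a₀ v| ≤ φ a) :
    HasDerivAt (fun a => ∫ v in c..b a, F a v) (D + F a₀ (b a₀) * b') a₀ := by
  set E := fun a => ∫ v in b a₀..b a, (F a v - F a₀ v)
  have hsplit : (fun a => ∫ v in c..b a, F a v) =ᶠ[𝓝 a₀]
      fun a => (∫ v in c..b a₀, F a v) + ((∫ v in b a₀..b a, F a₀ v) + E a) := by
    filter_upwards [hint] with a ⟨h₁, h₂, h₃⟩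
    simp only [E]
    rw [intervalIntegral.integral_sub h₂ h₃, add_sub_cancel,
      intervalIntegral.integral_add_adjacent_intervals h₁ h₂]
  have hmove : HasDerivAt (fun a => ∫ v in b a₀..b a, F a₀ v) (F a₀ (b a₀) * b') a₀ :=
    (intervalIntegral.integral_hasDerivAt_right IntervalIntegrable.refl hmeas hcont).comp a₀ hb
  have hE : HasDerivAt E 0 a₀ := by
    have hbound : E =O[𝓝 a₀] fun a => φ a * (b a - b a₀) := by
      refine IsBigO.of_bound 1 ?_
      filter_upwards [hunif] with a ha
      refine (intervalIntegral.norm_integral_le_of_norm_le_const ha).trans ?_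
      rw [one_mul, norm_mul, norm_eq_abs, norm_eq_abs]
      exact mul_le_mul_of_nonneg_right (le_abs_self _) (abs_nonneg _)
    have hsmall : (fun a => φ a * (b a - b a₀)) =o[𝓝 a₀] fun a => a - a₀ := by
      simpa using ((isLittleO_one_iff ℝ).2 hφ).mul_isBigO hb.isBigO_sub
    rw [hasDerivAt_iff_isLittleO]
    simpa [E] using hbound.trans_isLittleO hsmall
  exact ((hD.add (hmove.add hE)).congr_of_eventuallyEq hsplit).congr_deriv (by ring)

lemma intervalIntegrable_sub_rpow_neg_half (c x : ℝ) :
    IntervalIntegrable (fun v : ℝ => (v - c) ^ (-(1 : ℝ) / 2)) volume c x := by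
  simpa using (intervalIntegral.intervalIntegrable_rpow' (a := 0) (b := x - c)
    (by norm_num : -1 < -(1 : ℝ) / 2)).comp_sub_right c

lemma integrableOn_sub_one_rpow_neg_three_halves :
    IntegrableOn (fun v : ℝ => (v - 1) ^ (-(3 : ℝ) / 2)) (Ioi 2) := by
  have hpre : (fun v : ℝ => v - 1) ⁻¹' Ioi 1 = Ioi 2 := by
    ext v
    simp only [mem_preimage, mem_Ioi]
    constructor <;> intro <;> linarith
  have h := (measurePreserving_sub_right volume (1 : ℝ)).integrableOn_comp_preimage
    (measurableEmbedding_subRight 1) (f := fun t : ℝ => t ^ (-(3 : ℝ) / 2)) (s := Ioi 1)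
  rw [hpre] at h
  exact h.2 (integrableOn_Ioi_rpow_of_lt (by norm_num) one_pos)

lemma one_lt_sinh_div_sinh {a b : ℝ} (ha : 0 < a) (hab : a < b) : 1 < sinh b / sinh a :=
  (one_lt_div (sinh_pos_iff.2 ha)).2 (sinh_lt_sinh.2 hab)

lemma strictAntiOn_sinh_div_sinh {ρ : ℝ} (hρ : 0 < ρ) :
    StrictAntiOn (fun a => sinh ρ / sinh a) (Ioi 0) := fun _ (ha : 0 < _) _ _ hab =>
  div_lt_div_of_pos_left (sinh_pos_iff.2 hρ) (sinh_pos_iff.2 ha) (sinh_lt_sinh.2 hab)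

noncomputable def catWeight (q v : ℝ) : ℝ := (v ^ (2 * q) - 1) ^ (-(1 : ℝ) / 2)

section catWeight

variable {q v x : ℝ}

lemma catWeight_pos (hq : 0 < q) (hv : 1 < v) : 0 < catWeight q v :=
  rpow_pos_of_pos (sub_pos.2 (one_lt_rpow hv (by positivity))) _

lemma catWeight_nonneg (hq : 0 ≤ q) (hv : 1 ≤ v) : 0 ≤ catWeight q v :=
  rpow_nonneg (sub_nonneg.2 (one_le_rpow hv (by positivity))) _

lemma catWeight_le (hq : 1 / 2 ≤ q) (hv : 1 < v) : catWeight q v ≤ (v - 1) ^ (-(1 : ℝ) / 2) := by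
  refine rpow_le_rpow_of_nonpos (by linarith) ?_ (by norm_num)
  have : v ^ (1 : ℝ) ≤ v ^ (2 * q) := rpow_le_rpow_of_exponent_le hv.le (by linarith)
  rw [rpow_one] at this
  linarith

lemma measurable_catWeight : Measurable (catWeight q) := by
  unfold catWeight; fun_prop

lemma continuousOn_catWeight (hq : 0 < q) : ContinuousOn (catWeight q) (Ioi 1) := fun _ hv =>
  (((continuousAt_id.rpow_const (Or.inl (zero_lt_one.trans (mem_Ioi.1 hv)).ne')).sub
    continuousAt_const).rpow_const
    (Or.inl (sub_pos.2 (one_lt_rpow hv (by positivity))).ne')).continuousWithinAt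

lemma intervalIntegrable_catWeight (hq : 1 / 2 ≤ q) (hx : 1 ≤ x) :
    IntervalIntegrable (catWeight q) volume 1 x := by
  refine (intervalIntegrable_sub_rpow_neg_half 1 x).mono_fun
    measurable_catWeight.aestronglyMeasurable
    ((ae_restrict_iff' measurableSet_uIoc).2 (.of_forall fun v hv => ?_))
  rw [uIoc_of_le hx] at hv
  show ‖catWeight q v‖ ≤ ‖(v - 1) ^ (-(1 : ℝ) / 2)‖
  rw [norm_of_nonneg (catWeight_nonneg (by linarith) hv.1.le),
    norm_of_nonneg (rpow_nonneg (by linarith [hv.1]) _)]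
  exact catWeight_le hq hv.1

lemma intervalIntegrable_catWeight_mul (hq : 1 / 2 ≤ q) (hx : 1 ≤ x) {m : ℝ → ℝ} {C : ℝ}
    (hm : Measurable m) (hmC : ∀ v ∈ Ioc 1 x, |m v| ≤ C) :
    IntervalIntegrable (fun v => catWeight q v * m v) volume 1 x := by
  rw [intervalIntegrable_iff_integrableOn_Ioc_of_le hx]
  exact ((intervalIntegrable_iff_integrableOn_Ioc_of_le hx).1
    (intervalIntegrable_catWeight hq hx)).mul_bdd hm.aestronglyMeasurable
    (ae_restrict_of_forall_mem measurableSet_Ioc hmC)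

lemma integral_catWeight_le (hq : 1 / 2 ≤ q) (hx : 1 ≤ x) :
    ∫ v in 1..x, catWeight q v ≤ 2 * (x - 1) ^ (1 / 2 : ℝ) := by
  have hsing : ∫ v in 1..x, (v - 1) ^ (-(1 : ℝ) / 2) = 2 * (x - 1) ^ (1 / 2 : ℝ) := by
    rw [intervalIntegral.integral_comp_sub_right (fun t => t ^ (-(1 : ℝ) / 2)),
      integral_rpow (Or.inl (by norm_num))]
    norm_num
    ring
  rw [← hsing]
  exact intervalIntegral.integral_mono_on_of_le_Ioo hx (intervalIntegrable_catWeight hq hx)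
    (intervalIntegrable_sub_rpow_neg_half 1 x) fun v hv => catWeight_le hq hv.1

lemma integrableOn_catWeight_div (hq : 1 / 2 ≤ q) :
    IntegrableOn (fun v => catWeight q v / v) (Ioi 1) := by
  rw [← Ioc_union_Ioi_eq_Ioi one_le_two]
  refine IntegrableOn.union ?_ ?_
  · refine (intervalIntegrable_iff_integrableOn_Ioc_of_le one_le_two).1 ?_
    simp only [div_eq_mul_inv]
    refine intervalIntegrable_catWeight_mul hq one_le_two (C := 1) measurable_inv fun v hv => ?_
    rw [abs_inv, abs_of_pos (zero_lt_one.trans hv.1)]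
    exact inv_le_one_of_one_le₀ hv.1.le
  · refine integrableOn_sub_one_rpow_neg_three_halves.mono'
      ((measurable_catWeight.div measurable_id).aestronglyMeasurable)
      (ae_restrict_of_forall_mem measurableSet_Ioi fun v (hv : 2 < v) => ?_)
    rw [norm_of_nonneg (div_nonneg (catWeight_nonneg (by linarith) (by linarith)) (by linarith))]
    calc catWeight q v / v ≤ (v - 1) ^ (-(1 : ℝ) / 2) / (v - 1) :=
          div_le_div₀ (rpow_nonneg (by linarith) _) (catWeight_le hq (by linarith))
            (by linarith) (by linarith)
      _ = (v - 1) ^ (-(3 : ℝ) / 2) := by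
          rw [div_eq_mul_inv, ← rpow_neg_one, ← rpow_add (by linarith)]
          norm_num

lemma mul_catWeight_eq (hq : 0 ≤ q) (hx : 1 ≤ x) :
    x * catWeight q x = (x ^ (2 * q - 2) - (x ^ 2)⁻¹) ^ (-(1 : ℝ) / 2) := by
  have hx0 : 0 < x := zero_lt_one.trans_le hx
  have hsplit : x ^ (2 * q - 2) - (x ^ 2)⁻¹ = (x ^ (2 * q) - 1) * (x ^ 2)⁻¹ := by
    rw [rpow_sub hx0, rpow_two, div_eq_mul_inv, sub_mul, one_mul]
  rw [hsplit, mul_rpow (sub_nonneg.2 (one_le_rpow hx (by positivity))) (by positivity),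
    inv_rpow (by positivity), rpow_neg_half_sq hx0, inv_inv, catWeight, mul_comm]

lemma strictAntiOn_mul_catWeight (hq : 1 ≤ q) :
    StrictAntiOn (fun x => x * catWeight q x) (Ioi 1) := by
  intro x (hx : 1 < x) y (hy : 1 < y) hxy
  have hq0 : 0 ≤ q := by linarith
  simp only [mul_catWeight_eq hq0 hx.le, mul_catWeight_eq hq0 hy.le]
  refine rpow_lt_rpow_of_neg ?_ ?_ (by norm_num)
  · have h1 : 1 ≤ x ^ (2 * q - 2) := one_le_rpow hx.le (by linarith)
    have h2 : (x ^ 2)⁻¹ < 1 := inv_lt_one_of_one_lt₀ (one_lt_pow₀ hx two_ne_zero)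
    linarith
  · have h1 : x ^ (2 * q - 2) ≤ y ^ (2 * q - 2) := rpow_le_rpow (by linarith) hxy.le (by linarith)
    have h2 : (y ^ 2)⁻¹ < (x ^ 2)⁻¹ :=
      inv_strictAnti₀ (by positivity) (pow_lt_pow_left₀ hxy (by linarith) two_ne_zero)
    linarith

end catWeight

noncomputable def catKernel (s v : ℝ) : ℝ := s * (1 + v ^ 2 * s ^ 2) ^ (-(1 : ℝ) / 2)

noncomputable def catKernelDeriv (s v : ℝ) : ℝ := (1 + v ^ 2 * s ^ 2) ^ (-(3 : ℝ) / 2)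

section catKernel

variable {s s₀ v : ℝ}

lemma catKernel_pos (hs : 0 < s) : 0 < catKernel s v :=
  mul_pos hs (rpow_pos_of_pos (by positivity) _)

lemma abs_catKernel_le (hv : 0 < v) : |catKernel s v| ≤ v⁻¹ := by
  have hsqrt : v * |s| ≤ √(1 + v ^ 2 * s ^ 2) :=
    le_sqrt_of_sq_le (by rw [mul_pow, sq_abs]; linarith)
  rw [catKernel, abs_mul, abs_of_pos (rpow_pos_of_pos (by positivity) _), neg_div,
    rpow_neg (by positivity), ← sqrt_eq_rpow, ← div_eq_mul_inv, div_le_iff₀ (by positivity),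
    ← div_eq_inv_mul, le_div_iff₀ hv, mul_comm]
  exact hsqrt

lemma continuous_catKernel : Continuous (Function.uncurry catKernel) :=
  continuous_fst.mul ((by fun_prop : Continuous fun p : ℝ × ℝ => 1 + p.2 ^ 2 * p.1 ^ 2).rpow_const
    fun p => Or.inl (by positivity))

lemma continuous_catKernel_right (s : ℝ) : Continuous (catKernel s) :=
  continuous_catKernel.comp (Continuous.prodMk_right s)

lemma measurable_catKernelDeriv : Measurable (catKernelDeriv s) := by
  unfold catKernelDeriv; fun_prop

lemma hasDerivAt_catKernel (s v : ℝ) :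
    HasDerivAt (fun s => catKernel s v) (catKernelDeriv s v) s := by
  have hu : (0 : ℝ) < 1 + v ^ 2 * s ^ 2 := by positivity
  have hbase : HasDerivAt (fun s : ℝ => 1 + v ^ 2 * s ^ 2) (v ^ 2 * (2 * s)) s := by
    simpa using (((hasDerivAt_id s).pow 2).const_mul (v ^ 2)).const_add 1
  refine ((hasDerivAt_id s).mul
    (hbase.rpow_const (p := -(1 : ℝ) / 2) (Or.inl hu.ne'))).congr_deriv ?_
  have h1 : (1 + v ^ 2 * s ^ 2) ^ (-(1 : ℝ) / 2) =
      (1 + v ^ 2 * s ^ 2) * (1 + v ^ 2 * s ^ 2) ^ (-(3 : ℝ) / 2) := by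
    rw [← rpow_one_add' hu.le (by norm_num)]
    norm_num
  have h2 : (1 + v ^ 2 * s ^ 2) ^ (-(1 : ℝ) / 2 - 1) = (1 + v ^ 2 * s ^ 2) ^ (-(3 : ℝ) / 2) := by
    norm_num
  rw [h1, h2, catKernelDeriv]
  simp only [id_eq]
  ring

lemma catKernelDeriv_pos : 0 < catKernelDeriv s v := rpow_pos_of_pos (by positivity) _

lemma catKernelDeriv_le_one : catKernelDeriv s v ≤ 1 :=
  rpow_le_one_of_one_le_of_nonpos (by nlinarith [sq_nonneg (v * s)]) (by norm_num)

lemma catKernelDeriv_anti (h₀ : 0 ≤ s₀) (h : s₀ ≤ s) : catKernelDeriv s v ≤ catKernelDeriv s₀ v :=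
  rpow_le_rpow_of_nonpos (by positivity)
    (by nlinarith [pow_le_pow_left₀ h₀ h 2, sq_nonneg v]) (by norm_num)

lemma abs_catKernel_sub_le : |catKernel s v - catKernel s₀ v| ≤ |s - s₀| := by
  simpa only [one_mul, norm_eq_abs] using
    convex_univ.norm_image_sub_le_of_norm_hasDerivWithin_le (f := fun s => catKernel s v) (C := 1)
      (fun x _ => (hasDerivAt_catKernel x v).hasDerivWithinAt)
      (fun x _ => by
        rw [norm_of_nonneg catKernelDeriv_pos.le]
        exact catKernelDeriv_le_one)
      (mem_univ s₀) (mem_univ s)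

end catKernel

lemma catLam_eq (q a ρ : ℝ) :
    catLam q a ρ = ∫ v in 1..sinh ρ / sinh a, catWeight q v * catKernel (sinh a) v :=
  intervalIntegral.integral_congr fun v _ => by simp only [catWeight, catKernel]; ring

section catLam

variable {q ρ a v x : ℝ}

lemma catWeight_mul_catKernel_le (hq : 0 ≤ q) (hv : 1 ≤ v) (s : ℝ) :
    |catWeight q v * catKernel s v| ≤ catWeight q v / v := by
  rw [abs_mul, abs_of_nonneg (catWeight_nonneg hq hv), div_eq_mul_inv]
  exact mul_le_mul_of_nonneg_left (abs_catKernel_le (by linarith)) (catWeight_nonneg hq hv)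

lemma intervalIntegrable_catWeight_mul_catKernel (hq : 1 / 2 ≤ q) (hx : 1 ≤ x) (s : ℝ) :
    IntervalIntegrable (fun v => catWeight q v * catKernel s v) volume 1 x :=
  intervalIntegrable_catWeight_mul hq hx (C := 1)
    (continuous_catKernel_right s).measurable fun v hv =>
      (abs_catKernel_le (by linarith [hv.1])).trans (inv_le_one_of_one_le₀ hv.1.le)

lemma integrableOn_catWeight_mul_catKernel (hq : 1 / 2 ≤ q) (s : ℝ) :
    IntegrableOn (fun v => catWeight q v * catKernel s v) (Ioi 1) :=
  (integrableOn_catWeight_div hq).mono'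
    (measurable_catWeight.mul (continuous_catKernel_right s).measurable).aestronglyMeasurable
    (ae_restrict_of_forall_mem measurableSet_Ioi fun v (hv : 1 < v) =>
      catWeight_mul_catKernel_le (by linarith) hv.le s)

lemma catLam_pos (hq : 1 / 2 ≤ q) (ha : 0 < a) (haρ : a < ρ) : 0 < catLam q a ρ := by
  rw [catLam_eq]
  exact intervalIntegral.intervalIntegral_pos_of_pos_on
    (intervalIntegrable_catWeight_mul_catKernel hq (one_lt_sinh_div_sinh ha haρ).le _)
    (fun v hv => mul_pos (catWeight_pos (by linarith) hv.1) (catKernel_pos (sinh_pos_iff.2 ha)))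
    (one_lt_sinh_div_sinh ha haρ)

lemma catLam_le_rpow (hq : 1 / 2 ≤ q) (ha : 0 < a) (haρ : a < ρ) :
    catLam q a ρ ≤ 2 * (sinh ρ / sinh a - 1) ^ (1 / 2 : ℝ) := by
  have hX := one_lt_sinh_div_sinh ha haρ
  rw [catLam_eq]
  refine le_trans (intervalIntegral.integral_mono_on hX.le
    (intervalIntegrable_catWeight_mul_catKernel hq hX.le _) (intervalIntegrable_catWeight hq hX.le)
    fun v hv => ?_) (integral_catWeight_le hq hX.le)
  have hv : 1 ≤ v := hv.1
  calc catWeight q v * catKernel (sinh a) v ≤ catWeight q v / v :=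
        (le_abs_self _).trans (catWeight_mul_catKernel_le (by linarith) hv _)
    _ ≤ catWeight q v := div_le_self (catWeight_nonneg (by linarith) hv) hv

lemma catLam_le_integral_Ioi (hq : 1 / 2 ≤ q) (ha : 0 < a) (haρ : a < ρ) :
    catLam q a ρ ≤ ∫ v in Ioi 1, catWeight q v * catKernel (sinh a) v := by
  rw [catLam_eq, intervalIntegral.integral_of_le (one_lt_sinh_div_sinh ha haρ).le]
  refine setIntegral_mono_set (integrableOn_catWeight_mul_catKernel hq _)
    (ae_restrict_of_forall_mem measurableSet_Ioi fun v (hv : 1 < v) => ?_)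
    Ioc_subset_Ioi_self.eventuallyLE
  exact mul_nonneg (catWeight_nonneg (by linarith) hv.le) (catKernel_pos (sinh_pos_iff.2 ha)).le

lemma continuous_integral_catWeight_mul_catKernel (hq : 1 / 2 ≤ q) :
    Continuous fun s => ∫ v in Ioi 1, catWeight q v * catKernel s v :=
  continuous_of_dominated
    (fun s => (integrableOn_catWeight_mul_catKernel hq s).aestronglyMeasurable)
    (fun s => ae_restrict_of_forall_mem measurableSet_Ioi fun v (hv : 1 < v) =>
      catWeight_mul_catKernel_le (by linarith) hv.le s)
    (integrableOn_catWeight_div hq)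
    (.of_forall fun v =>
      continuous_const.mul (continuous_catKernel.comp (Continuous.prodMk_left v)))

lemma tendsto_catLam_nhdsGT_zero (hq : 1 / 2 ≤ q) (hρ : 0 < ρ) :
    Tendsto (fun a => catLam q a ρ) (𝓝[>] 0) (𝓝 0) := by
  have hup : Tendsto (fun a => ∫ v in Ioi 1, catWeight q v * catKernel (sinh a) v) (𝓝 0) (𝓝 0) := by
    have h0 : ∫ v in Ioi 1, catWeight q v * catKernel 0 v = 0 := by simp [catKernel]
    simpa only [Function.comp_def, sinh_zero, h0] using
      ((continuous_integral_catWeight_mul_catKernel hq).comp continuous_sinh).tendsto 0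
  have hnear : ∀ᶠ a in 𝓝[>] 0, a ∈ Ioo 0 ρ := Ioo_mem_nhdsGT hρ
  exact tendsto_of_tendsto_of_tendsto_of_le_of_le' tendsto_const_nhds
    (hup.mono_left nhdsWithin_le_nhds) (hnear.mono fun a ha => (catLam_pos hq ha.1 ha.2).le)
    (hnear.mono fun a ha => catLam_le_integral_Ioi hq ha.1 ha.2)

lemma tendsto_catLam_nhdsLT (hq : 1 / 2 ≤ q) (hρ : 0 < ρ) :
    Tendsto (fun a => catLam q a ρ) (𝓝[<] ρ) (𝓝 0) := by
  have hup : Tendsto (fun a => 2 * (sinh ρ / sinh a - 1) ^ (1 / 2 : ℝ)) (𝓝 ρ) (𝓝 0) := by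
    have hcont : ContinuousAt (fun a => 2 * (sinh ρ / sinh a - 1) ^ (1 / 2 : ℝ)) ρ :=
      continuousAt_const.mul ((continuousAt_const.div continuous_sinh.continuousAt
        (sinh_pos_iff.2 hρ).ne').sub continuousAt_const |>.rpow_const (Or.inr (by norm_num)))
    simpa [div_self (sinh_pos_iff.2 hρ).ne'] using hcont.tendsto
  have hnear : ∀ᶠ a in 𝓝[<] ρ, a ∈ Ioo 0 ρ := Ioo_mem_nhdsLT hρ
  exact tendsto_of_tendsto_of_tendsto_of_le_of_le' tendsto_const_nhds
    (hup.mono_left nhdsWithin_le_nhds) (hnear.mono fun a ha => (catLam_pos hq ha.1 ha.2).le)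
    (hnear.mono fun a ha => catLam_le_rpow hq ha.1 ha.2)

end catLam

lemma catKernel_sinh_div_sinh {a ρ : ℝ} (ha : sinh a ≠ 0) :
    catKernel (sinh a) (sinh ρ / sinh a) = sinh a / cosh ρ := by
  rw [catKernel, div_pow, div_mul_cancel₀ _ (pow_ne_zero 2 ha), ← cosh_sq',
    rpow_neg_half_sq (cosh_pos ρ), div_eq_mul_inv]

noncomputable def catLamDerivInt (q ρ a : ℝ) : ℝ :=
  ∫ v in 1..sinh ρ / sinh a, catWeight q v * catKernelDeriv (sinh a) v

noncomputable def catLamDerivBdry (q ρ a : ℝ) : ℝ :=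
  sinh ρ / sinh a * catWeight q (sinh ρ / sinh a) / cosh ρ

section catLamDeriv

variable {q ρ a₀ x : ℝ}

lemma hasDerivAt_integral_catWeight_mul_catKernel_sinh (hq : 1 / 2 ≤ q) (hx : 1 ≤ x) :
    HasDerivAt (fun a => ∫ v in 1..x, catWeight q v * catKernel (sinh a) v)
      (cosh a₀ * ∫ v in 1..x, catWeight q v * catKernelDeriv (sinh a₀) v) a₀ := by
  set R := |a₀| + 1
  have hg := intervalIntegrable_catWeight hq hx
  have hbound : ∀ v ∈ uIoc 1 x, ∀ a ∈ Metric.ball 0 R,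
      ‖catWeight q v * (catKernelDeriv (sinh a) v * cosh a)‖ ≤ catWeight q v * cosh R := by
    intro v hv a ha
    rw [uIoc_of_le hx] at hv
    have hgv := catWeight_nonneg (q := q) (by linarith) hv.1.le
    have hcosh : cosh a ≤ cosh R := by
      rw [cosh_le_cosh, abs_of_pos (by positivity : 0 < R)]
      simpa using (mem_ball_zero_iff.1 ha).le
    rw [norm_mul, norm_mul, norm_of_nonneg hgv, norm_of_nonneg catKernelDeriv_pos.le,
      norm_of_nonneg (cosh_pos a).le]
    exact mul_le_mul_of_nonneg_left
      ((mul_le_of_le_one_left (cosh_pos a).le catKernelDeriv_le_one).trans hcosh) hgv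
  obtain ⟨-, h⟩ := intervalIntegral.hasDerivAt_integral_of_dominated_loc_of_deriv_le
    (F := fun a v => catWeight q v * catKernel (sinh a) v)
    (F' := fun a v => catWeight q v * (catKernelDeriv (sinh a) v * cosh a))
    (bound := fun v => catWeight q v * cosh R) (s := Metric.ball 0 R) (x₀ := a₀)
    (Metric.isOpen_ball.mem_nhds (by simp [R]))
    (.of_forall fun a =>
      (intervalIntegrable_catWeight_mul_catKernel hq hx _).aestronglyMeasurable_restrict_uIoc)
    (intervalIntegrable_catWeight_mul_catKernel hq hx _)
    (measurable_catWeight.mul (measurable_catKernelDeriv.mul_const _)).aestronglyMeasurable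
    (.of_forall hbound) (hg.mul_const _)
    (.of_forall fun v _ a _ =>
      ((hasDerivAt_catKernel (sinh a) v).comp a (hasDerivAt_sinh a)).const_mul _)
  refine h.congr_deriv ?_
  rw [← intervalIntegral.integral_const_mul]
  exact intervalIntegral.integral_congr fun v _ => by ring

lemma abs_catWeight_mul_catKernel_sub_le {m s s₀ v : ℝ} (hq : 1 / 2 ≤ q) (hm : 1 < m)
    (hmv : m ≤ v) :
    |catWeight q v * catKernel s v - catWeight q v * catKernel s₀ v| ≤
      (m - 1) ^ (-(1 : ℝ) / 2) * |s - s₀| := by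
  have hgv := catWeight_nonneg (q := q) (by linarith) (by linarith)
  rw [← mul_sub, abs_mul, abs_of_nonneg hgv]
  refine mul_le_mul ((catWeight_le (v := v) hq (by linarith)).trans ?_) abs_catKernel_sub_le
    (abs_nonneg _) (rpow_nonneg (by linarith) _)
  exact rpow_le_rpow_of_nonpos (by linarith) (by linarith) (by norm_num)

lemma hasDerivAt_catLam (hq : 1 / 2 ≤ q) (ha₀ : 0 < a₀) (hρ : a₀ < ρ) :
    HasDerivAt (fun a => catLam q a ρ)
      (cosh a₀ * (catLamDerivInt q ρ a₀ - catLamDerivBdry q ρ a₀)) a₀ := by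
  set X := fun a => sinh ρ / sinh a
  have hX₀ : 1 < X a₀ := one_lt_sinh_div_sinh ha₀ hρ
  have hs₀ : sinh a₀ ≠ 0 := (sinh_pos_iff.2 ha₀).ne'
  have hXd : HasDerivAt X (-(sinh ρ * cosh a₀) / sinh a₀ ^ 2) a₀ := by
    simpa using (hasDerivAt_const a₀ (sinh ρ)).fun_div (hasDerivAt_sinh a₀) hs₀
  obtain ⟨m, hm1, hmX⟩ := exists_between hX₀
  have hnear : ∀ᶠ a in 𝓝 a₀, m < X a := hXd.continuousAt.eventually (eventually_gt_nhds hmX)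
  have hF : ∀ s, ContinuousOn (fun v => catWeight q v * catKernel s v) (Ioi 1) := fun s =>
    (continuousOn_catWeight (by linarith)).mul
      (continuous_catKernel_right s).continuousOn
  have hgt : ∀ a, m < X a → ∀ v ∈ uIcc (X a₀) (X a), m < v := fun a ha v hv =>
    (lt_min hmX ha).trans_le hv.1
  have hsub : ∀ a, m < X a → uIcc (X a₀) (X a) ⊆ Ioi 1 := fun a ha v hv =>
    mem_Ioi.2 (by linarith [hgt a ha v hv])
  have hunif : ∀ a, m < X a → ∀ v ∈ uIoc (X a₀) (X a),
      |catWeight q v * catKernel (sinh a) v - catWeight q v * catKernel (sinh a₀) v| ≤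
        (m - 1) ^ (-(1 : ℝ) / 2) * |sinh a - sinh a₀| := fun a ha v hv =>
    abs_catWeight_mul_catKernel_sub_le hq hm1 (hgt a ha v (uIoc_subset_uIcc hv)).le
  have hφ : Tendsto (fun a => (m - 1) ^ (-(1 : ℝ) / 2) * |sinh a - sinh a₀|) (𝓝 a₀) (𝓝 0) := by
    have hc : Continuous fun a => (m - 1) ^ (-(1 : ℝ) / 2) * |sinh a - sinh a₀| := by fun_prop
    simpa using hc.tendsto a₀
  have key := hasDerivAt_intervalIntegral_varying_upper
    (hasDerivAt_integral_catWeight_mul_catKernel_sinh hq hX₀.le) hXd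
    (hnear.mono fun a ha => ⟨intervalIntegrable_catWeight_mul_catKernel hq hX₀.le _,
      ((hF _).mono (hsub a ha)).intervalIntegrable, ((hF _).mono (hsub a ha)).intervalIntegrable⟩)
    ((hF _).stronglyMeasurableAtFilter isOpen_Ioi _ hX₀)
    ((hF _).continuousAt (Ioi_mem_nhds hX₀)) hφ (hnear.mono hunif)
  simp only [catLam_eq]
  refine key.congr_deriv ?_
  rw [catKernel_sinh_div_sinh hs₀, catLamDerivInt, catLamDerivBdry]
  field_simp
  ring

lemma strictAntiOn_catLamDerivInt (hq : 1 / 2 ≤ q) :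
    StrictAntiOn (catLamDerivInt q ρ) (Ioo 0 ρ) := by
  intro a₁ ⟨ha₁, ha₁ρ⟩ a₂ ⟨ha₂, ha₂ρ⟩ h
  have hX₁ := one_lt_sinh_div_sinh ha₁ ha₁ρ
  have hX₂ := one_lt_sinh_div_sinh ha₂ ha₂ρ
  have hX : sinh ρ / sinh a₂ < sinh ρ / sinh a₁ :=
    strictAntiOn_sinh_div_sinh (ha₁.trans ha₁ρ) ha₁ (mem_Ioi.2 ha₂) h
  have hint : ∀ s x, 1 ≤ x →
      IntervalIntegrable (fun v => catWeight q v * catKernelDeriv s v) volume 1 x := fun s x hx =>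
    intervalIntegrable_catWeight_mul hq hx measurable_catKernelDeriv fun v _ => by
      rw [abs_of_pos catKernelDeriv_pos]
      exact catKernelDeriv_le_one
  have hmono : catLamDerivInt q ρ a₂ ≤
      ∫ v in 1..sinh ρ / sinh a₂, catWeight q v * catKernelDeriv (sinh a₁) v :=
    intervalIntegral.integral_mono_on hX₂.le (hint _ _ hX₂.le) (hint _ _ hX₂.le) fun v hv =>
      mul_le_mul_of_nonneg_left (catKernelDeriv_anti (sinh_pos_iff.2 ha₁).le (sinh_le_sinh.2 h.le))
        (catWeight_nonneg (by linarith) hv.1)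
  have hextra : 0 < ∫ v in sinh ρ / sinh a₂..sinh ρ / sinh a₁,
      catWeight q v * catKernelDeriv (sinh a₁) v :=
    intervalIntegral.intervalIntegral_pos_of_pos_on ((hint _ _ hX₂.le).symm.trans (hint _ _ hX₁.le))
      (fun v hv => mul_pos (catWeight_pos (by linarith) (hX₂.trans hv.1)) catKernelDeriv_pos) hX
  rw [← intervalIntegral.integral_interval_sub_left (hint _ _ hX₁.le) (hint _ _ hX₂.le)] at hextra
  unfold catLamDerivInt at hmono ⊢
  linarith

lemma strictMonoOn_catLamDerivBdry (hq : 1 ≤ q) :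
    StrictMonoOn (catLamDerivBdry q ρ) (Ioo 0 ρ) := by
  intro a₁ ⟨ha₁, ha₁ρ⟩ a₂ ⟨ha₂, ha₂ρ⟩ h
  exact div_lt_div_of_pos_right (strictAntiOn_mul_catWeight hq (one_lt_sinh_div_sinh ha₂ ha₂ρ)
    (one_lt_sinh_div_sinh ha₁ ha₁ρ)
    (strictAntiOn_sinh_div_sinh (ha₁.trans ha₁ρ) ha₁ (mem_Ioi.2 ha₂) h)) (cosh_pos ρ)

end catLamDeriv

/-- For `q ≥ 1` and fixed `ρ > 0`, the function `γ(a) = λ(a, ρ)` is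
positive and continuous on `(0, ρ)`, tends to `0` as `a → 0⁺` and as `a → ρ⁻`, and
attains its maximum over `(0, ρ)` at exactly one point. -/
theorem stmt_15 (q ρ : ℝ) (hq : 1 ≤ q) (hρ : 0 < ρ) :
    (∀ a ∈ Set.Ioo (0 : ℝ) ρ, 0 < catLam q a ρ) ∧
    ContinuousOn (fun a => catLam q a ρ) (Set.Ioo 0 ρ) ∧
    Filter.Tendsto (fun a => catLam q a ρ) (nhdsWithin 0 (Set.Ioi 0)) (nhds 0) ∧
    Filter.Tendsto (fun a => catLam q a ρ) (nhdsWithin ρ (Set.Iio ρ)) (nhds 0) ∧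
    (∃! a : ℝ, a ∈ Set.Ioo (0 : ℝ) ρ ∧ ∀ b ∈ Set.Ioo (0 : ℝ) ρ, catLam q b ρ ≤ catLam q a ρ) := by
  have hq' : 1 / 2 ≤ q := by linarith
  have hpos : ∀ a ∈ Ioo 0 ρ, 0 < catLam q a ρ := fun a ha => catLam_pos hq' ha.1 ha.2
  have hcont : ContinuousOn (fun a => catLam q a ρ) (Ioo 0 ρ) := fun a ha =>
    (hasDerivAt_catLam hq' ha.1 ha.2).continuousAt.continuousWithinAt
  have hlim₀ := tendsto_catLam_nhdsGT_zero hq' hρ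
  have hlimρ := tendsto_catLam_nhdsLT hq' hρ
  have hcrit : ∀ a ∈ Ioo 0 ρ, IsMaxOn (fun a => catLam q a ρ) (Ioo 0 ρ) a →
      catLamDerivInt q ρ a - catLamDerivBdry q ρ a = 0 := fun a ha hmax =>
    (mul_eq_zero.1 ((hmax.isLocalMax (Ioo_mem_nhds ha.1 ha.2)).hasDerivAt_eq_zero
      (hasDerivAt_catLam hq' ha.1 ha.2))).resolve_left (cosh_pos a).ne'
  have hanti : StrictAntiOn (fun a => catLamDerivInt q ρ a - catLamDerivBdry q ρ a) (Ioo 0 ρ) :=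
    fun x hx y hy hxy => sub_lt_sub (strictAntiOn_catLamDerivInt hq' hx hy hxy)
      (strictMonoOn_catLamDerivBdry hq hx hy hxy)
  obtain ⟨a, ha, hmax⟩ := exists_isMaxOn_Ioo_of_tendsto hρ hcont hlim₀ hlimρ hpos
  refine ⟨hpos, hcont, hlim₀, hlimρ, a, ⟨ha, isMaxOn_iff.1 hmax⟩, fun b ⟨hb, hbmax⟩ => ?_⟩
  exact hanti.injOn hb ha ((hcrit b hb (isMaxOn_iff.2 hbmax)).trans (hcrit a ha hmax).symm)
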